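/- For every integer j ≥ 0, the Laurent polynomial D_j^μ(f_κ) + ∑_{m=0}^{j} binom(j+1, m+1)·z^{j−m}·D_m^λ(f_κ) + z^{j+1}·∂f_κ/∂z (where the coefficient binom(j+1,m+1)·z^{j−m} equals ∂_z^{(m+1)} z^{j+1}) has vanishing coefficient of z^n for every integer n < 0. In other words, the irregularity f_κ of the irregular Heisenberg vertex algebra is conformal with respect to the Der_0(ℂ[[t]])-structure given by the D_k. -/

import Mathlib

/-!
Everything happens in the span of the monomials `λ_{p+1} μ_{q+1}`: on coefficient arrays
`c p q`, `D^λ_k` and `D^μ_k` act by shifting one index by `k` and multiplying by the old index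
plus one. The factor `1/(p+q+2)` in `f_κ` is absorbed by these factors,
`b·C(a+b, a)/(a+b) = C(a+b-1, a)`, so that with `a = p+1`, `b = q+1` and `N = a+b = j - n`
the coefficient of `λ_a μ_b z^n` is `(-1)^p/(2κ)` times
  `C(N-1-j, a) + ∑_{m ≤ j} (-1)^m C(j+1, m+1) C(N-1-m, b) - C(N, a)`.
This vanishes because `∑_{k ≤ j+1} (-1)^k C(j+1, k) C(N-k, b)` is a `(j+1)`-st finite difference
of `x ↦ C(x, b)`, namely `C(N-j-1, b-j-1) = C(N-j-1, a)`.
-/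

noncomputable section

/-- `D_k^λ` on `ℂ[λ_1,…,λ_r,μ_1,…,μ_r]`. -/
def Dlam (r k : ℕ) : Module.End ℂ (MvPolynomial (Fin r ⊕ Fin r) ℂ) :=
  ∑ j : Fin r,
    if h : (j : ℕ) + 1 + k ≤ r then
      (((j : ℕ) + 1 : ℕ) : ℂ) •
        ((LinearMap.mulLeft ℂ
            (MvPolynomial.X (Sum.inl (⟨(j : ℕ) + k, by omega⟩ : Fin r)))).comp
          (MvPolynomial.pderiv (Sum.inl j)).toLinearMap)
    else 0

/-- `D_k^μ` on `ℂ[λ_1,…,λ_r,μ_1,…,μ_r]`. -/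
def Dmu (r k : ℕ) : Module.End ℂ (MvPolynomial (Fin r ⊕ Fin r) ℂ) :=
  ∑ j : Fin r,
    if h : (j : ℕ) + 1 + k ≤ r then
      (((j : ℕ) + 1 : ℕ) : ℂ) •
        ((LinearMap.mulLeft ℂ
            (MvPolynomial.X (Sum.inr (⟨(j : ℕ) + k, by omega⟩ : Fin r)))).comp
          (MvPolynomial.pderiv (Sum.inr j)).toLinearMap)
    else 0

/-- The coefficient of `z^n` in `f_κ(z;λ,μ)`.  For `p q : Fin r` (so the math
indices are `p+1`, `q+1`), the term `λ_{p+1} μ_{q+1} z^{-(p+q+2)}` carries the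
scalar `(1/(2κ))·C(p+q+2, p+1)·(−1)^{p+2}/(p+q+2)`. -/
def fk (r : ℕ) (κ : ℂ) (n : ℤ) : MvPolynomial (Fin r ⊕ Fin r) ℂ :=
  ∑ p : Fin r, ∑ q : Fin r,
    if ((p : ℕ) + (q : ℕ) + 2 : ℤ) = -n then
      MvPolynomial.C
        ((1 / (2 * κ)) * (Nat.choose ((p : ℕ) + (q : ℕ) + 2) ((p : ℕ) + 1) : ℂ) *
          (-1 : ℂ) ^ ((p : ℕ) + 2) / (((p : ℕ) : ℂ) + ((q : ℕ) : ℂ) + 2))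
        * MvPolynomial.X (Sum.inl p) * MvPolynomial.X (Sum.inr q)
    else 0

open Finset MvPolynomial

theorem fwdDiff_iter_choose_eq (b n y : ℕ) :
    (fwdDiff 1)^[n] (fun x ↦ x.choose b : ℕ → ℤ) y
      = if n ≤ b then (y.choose (b - n) : ℤ) else 0 := by
  split_ifs with h
  · obtain ⟨c, rfl⟩ := Nat.exists_eq_add_of_le h
    simp [fwdDiff_iter_choose]
  · obtain ⟨c, rfl⟩ := Nat.exists_eq_add_of_lt (not_le.mp h)
    have hb : (fwdDiff 1)^[b] (fun x ↦ x.choose b : ℕ → ℤ) = fun _ ↦ 1 := by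
      simpa using fwdDiff_iter_choose 0 b
    rw [add_assoc, add_comm, Function.iterate_add_apply, Function.iterate_add_apply, hb]
    simp [Function.iterate_fixed]

theorem sum_range_alternating_choose_mul_choose (a b n : ℕ) (hn : n ≤ a + b) :
    ∑ k ∈ range (n + 1), (-1 : ℤ) ^ k * n.choose k * (a + b - k).choose b
      = (a + b - n).choose a := by
  have h := fwdDiff_iter_eq_sum_shift (1 : ℕ) (fun x ↦ x.choose b : ℕ → ℤ) n (a + b - n)
  rw [fwdDiff_iter_choose_eq, ← sum_range_reflect] at h
  have hrhs : ((a + b - n).choose a : ℤ)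
      = if n ≤ b then ((a + b - n).choose (b - n) : ℤ) else 0 := by
    split_ifs with hnb
    · rw [Nat.choose_symm_of_eq_add (show a + b - n = a + (b - n) by omega)]
    · rw [Nat.choose_eq_zero_of_lt (by omega), Nat.cast_zero]
  rw [hrhs, h]
  refine sum_congr rfl fun k hk ↦ ?_
  have hk : k ≤ n := Nat.lt_succ_iff.mp (mem_range.mp hk)
  rw [smul_eq_mul, add_tsub_cancel_right, Nat.sub_sub_self hk, Nat.choose_symm hk, smul_eq_mul,
    mul_one, show a + b - n + (n - k) = a + b - k by omega]

theorem choose_add_sum_alternating_choose_mul_choose (p q j : ℕ) (hj : j ≤ p + q + 1) :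
    ((p + q + 1 - j).choose (p + 1) : ℤ)
      + ∑ m ∈ range (j + 1),
          (-1) ^ m * ((j + 1).choose (m + 1) : ℤ) * (p + q + 1 - m).choose (q + 1)
      = (p + q + 2).choose (p + 1) := by
  have h := sum_range_alternating_choose_mul_choose (p + 1) (q + 1) (j + 1) (by omega)
  rw [sum_range_succ', show p + 1 + (q + 1) - (j + 1) = p + q + 1 - j by omega,
    show p + 1 + (q + 1) - 0 = (p + 1) + (q + 1) by omega,
    ← Nat.choose_symm_of_eq_add rfl, show p + 1 + (q + 1) = p + q + 2 by omega] at h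
  have hsum : ∑ m ∈ range (j + 1), (-1 : ℤ) ^ (m + 1) * ((j + 1).choose (m + 1) : ℤ)
        * ((p + q + 2 - (m + 1)).choose (q + 1) : ℕ)
      = -∑ m ∈ range (j + 1), (-1) ^ m * ((j + 1).choose (m + 1) : ℤ)
        * (p + q + 1 - m).choose (q + 1) := by
    rw [← sum_neg_distrib]
    refine sum_congr rfl fun m _ ↦ ?_
    rw [show p + q + 2 - (m + 1) = p + q + 1 - m by omega]
    ring
  rw [hsum] at h
  simp only [pow_zero, Nat.choose_zero_right, Nat.cast_one, one_mul] at h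
  linarith

theorem sum_fin_comp_add_eq {M : Type*} [AddCommMonoid M] {r k : ℕ} {g : ℕ → M}
    (hlt : ∀ i < k, g i = 0) (hge : ∀ i, r ≤ i → g i = 0) :
    ∑ i : Fin r, g (i + k) = ∑ i : Fin r, g i := by
  rw [Fin.sum_univ_eq_sum_range (fun i ↦ g (i + k)), Fin.sum_univ_eq_sum_range g]
  have hlow := sum_range_add g k r
  have hhigh := sum_range_add g r k
  rw [sum_eq_zero fun i hi ↦ hlt i (mem_range.mp hi), zero_add] at hlow
  rw [sum_eq_zero fun i _ ↦ hge (r + i) (Nat.le_add_right r i), add_zero] at hhigh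
  simp only [Nat.add_comm k] at hlow
  rw [← hlow, hhigh]

section ShiftDerivation

variable {σ : Type*} {r : ℕ}

-- Extending by zero lets `x_{i+k}` be written without the side condition `i + k < r`.
def extendX (v : Fin r → σ) (i : ℕ) : MvPolynomial σ ℂ :=
  if h : i < r then X (v ⟨i, h⟩) else 0

theorem extendX_coe (v : Fin r → σ) (i : Fin r) :
    extendX v i = X (v i) := by
  simp [extendX]

theorem extendX_of_le (v : Fin r → σ) {i : ℕ} (h : r ≤ i) :
    extendX v i = 0 := by
  simp [extendX, not_lt.mpr h]

def shiftDeriv (v : Fin r → σ) (k : ℕ) : Module.End ℂ (MvPolynomial σ ℂ) :=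
  ∑ j : Fin r,
    if h : (j : ℕ) + 1 + k ≤ r then
      (((j : ℕ) + 1 : ℕ) : ℂ) •
        ((LinearMap.mulLeft ℂ (X (v ⟨(j : ℕ) + k, by omega⟩))).comp
          (pderiv (v j)).toLinearMap)
    else 0

theorem Dlam_eq_shiftDeriv (k : ℕ) : Dlam r k = shiftDeriv Sum.inl k := rfl

theorem Dmu_eq_shiftDeriv (k : ℕ) : Dmu r k = shiftDeriv Sum.inr k := rfl

theorem shiftDeriv_X_mul {v : Fin r → σ} (hv : Function.Injective v) (k : ℕ) (p : Fin r)
    {g : MvPolynomial σ ℂ} (hg : ∀ i, pderiv (v i) g = 0) :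
    shiftDeriv v k (X (v p) * g) = (((p : ℕ) + 1 : ℕ) : ℂ) • (extendX v (p + k) * g) := by
  have hpderiv : ∀ i, pderiv (v i) (X (v p) * g) = if i = p then g else 0 := by
    intro i
    rw [pderiv_mul, hg, mul_zero, add_zero]
    split_ifs with h
    · rw [h, pderiv_X_self, one_mul]
    · rw [pderiv_X_of_ne (hv.ne (Ne.symm h)), zero_mul]
  rw [shiftDeriv, LinearMap.sum_apply, sum_eq_single p]
  · by_cases h : (p : ℕ) + 1 + k ≤ r
    · simp [h, hg, extendX, show (p : ℕ) + k < r by omega, mul_comm]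
    · simp [h, extendX, show ¬ (p : ℕ) + k < r by omega]
  · intro i _ hi
    split_ifs <;> simp [hpderiv, hi]
  · simp

end ShiftDerivation

-- `c p q` is the coefficient of `λ_{p+1} μ_{q+1}`; entries with an index `≥ r` are ignored.
def bilinPoly (r : ℕ) : (ℕ → ℕ → ℂ) →ₗ[ℂ] MvPolynomial (Fin r ⊕ Fin r) ℂ where
  toFun c := ∑ p : Fin r, ∑ q : Fin r, c p q • (X (Sum.inl p) * X (Sum.inr q))
  map_add' c d := by simp only [Pi.add_apply, add_smul, sum_add_distrib]
  map_smul' a c := by simp only [Pi.smul_apply, smul_eq_mul, mul_smul, smul_sum, RingHom.id_apply]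

theorem bilinPoly_apply (r : ℕ) (c : ℕ → ℕ → ℂ) :
    bilinPoly r c = ∑ p : Fin r, ∑ q : Fin r, c p q • (X (Sum.inl p) * X (Sum.inr q)) := rfl

def shiftFst (k : ℕ) (c : ℕ → ℕ → ℂ) (p q : ℕ) : ℂ :=
  if k ≤ p then ((p - k + 1 : ℕ) : ℂ) * c (p - k) q else 0

def shiftSnd (k : ℕ) (c : ℕ → ℕ → ℂ) (p q : ℕ) : ℂ :=
  if k ≤ q then ((q - k + 1 : ℕ) : ℂ) * c p (q - k) else 0

theorem Dlam_bilinPoly (r k : ℕ) (c : ℕ → ℕ → ℂ) :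
    Dlam r k (bilinPoly r c) = bilinPoly r (shiftFst k c) := by
  simp only [bilinPoly_apply, map_sum, map_smul, Dlam_eq_shiftDeriv,
    shiftDeriv_X_mul Sum.inl_injective _ _ fun _ ↦ pderiv_X_of_ne Sum.inr_ne_inl]
  refine sum_comm.trans ((sum_congr rfl fun q _ ↦ ?_).trans sum_comm)
  set g : ℕ → MvPolynomial (Fin r ⊕ Fin r) ℂ :=
    fun i ↦ shiftFst k c i q • (extendX Sum.inl i * X (Sum.inr q))
  calc ∑ p : Fin r,
        c p q • (((p : ℕ) + 1 : ℕ) : ℂ) • (extendX Sum.inl (p + k) * X (Sum.inr q))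
      = ∑ p : Fin r, g (p + k) := by
        refine sum_congr rfl fun p _ ↦ ?_
        simp [g, shiftFst, smul_smul, mul_comm]
    _ = ∑ p : Fin r, g p := by
        refine sum_fin_comp_add_eq (fun i hi ↦ ?_) (fun i hi ↦ ?_)
        · simp [g, shiftFst, not_le.mpr hi]
        · simp [g, extendX_of_le _ hi]
    _ = _ := by simp [g, extendX_coe]

theorem Dmu_bilinPoly (r k : ℕ) (c : ℕ → ℕ → ℂ) :
    Dmu r k (bilinPoly r c) = bilinPoly r (shiftSnd k c) := by
  simp only [bilinPoly_apply, map_sum, map_smul, Dmu_eq_shiftDeriv, mul_comm (X (Sum.inl _)),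
    shiftDeriv_X_mul Sum.inr_injective _ _ fun _ ↦ pderiv_X_of_ne Sum.inl_ne_inr]
  refine sum_congr rfl fun p _ ↦ ?_
  set g : ℕ → MvPolynomial (Fin r ⊕ Fin r) ℂ :=
    fun i ↦ shiftSnd k c p i • (extendX Sum.inr i * X (Sum.inl p))
  calc ∑ q : Fin r,
        c p q • (((q : ℕ) + 1 : ℕ) : ℂ) • (extendX Sum.inr (q + k) * X (Sum.inl p))
      = ∑ q : Fin r, g (q + k) := by
        refine sum_congr rfl fun q _ ↦ ?_
        simp [g, shiftSnd, smul_smul, mul_comm]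
    _ = ∑ q : Fin r, g q := by
        refine sum_fin_comp_add_eq (fun i hi ↦ ?_) (fun i hi ↦ ?_)
        · simp [g, shiftSnd, not_le.mpr hi]
        · simp [g, extendX_of_le _ hi]
    _ = _ := by simp [g, extendX_coe]

def fkWeight (κ : ℂ) (p q : ℕ) : ℂ :=
  (1 / (2 * κ)) * ((p + q + 2).choose (p + 1) : ℂ) * (-1 : ℂ) ^ (p + 2)
    / ((p : ℂ) + (q : ℂ) + 2)

def fkCoeff (κ : ℂ) (n : ℤ) (p q : ℕ) : ℂ :=
  if (p + q + 2 : ℤ) = -n then fkWeight κ p q else 0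

theorem fk_eq_bilinPoly (r : ℕ) (κ : ℂ) (n : ℤ) :
    fk r κ n = bilinPoly r (fkCoeff κ n) := by
  refine sum_congr rfl fun p _ ↦ sum_congr rfl fun q _ ↦ ?_
  rw [fkCoeff]
  split_ifs
  · rw [fkWeight, smul_eq_C_mul, mul_assoc]
  · rw [zero_smul]

theorem mul_fkWeight_eq (κ : ℂ) {p q : ℕ} {x y : ℂ}
    (h : x * (p + q + 2).choose (p + 1) = y * (p + q + 2)) :
    x * fkWeight κ p q = (2 * κ)⁻¹ * (-1) ^ p * y := by
  have hD : (p : ℂ) + q + 2 ≠ 0 := by exact_mod_cast Nat.succ_ne_zero (p + q + 1)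
  calc x * fkWeight κ p q
      = (2 * κ)⁻¹ * (-1) ^ p * (x * (p + q + 2).choose (p + 1) / (p + q + 2)) := by
        rw [fkWeight]; ring
    _ = _ := by rw [h, mul_div_cancel_right₀ _ hD]

theorem add_two_mul_fkWeight (κ : ℂ) (p q : ℕ) :
    ((p + q + 2 : ℕ) : ℂ) * fkWeight κ p q
      = (2 * κ)⁻¹ * (-1) ^ p * ((p + q + 2).choose (p + 1) : ℕ) :=
  mul_fkWeight_eq κ (by push_cast; ring)

theorem succ_mul_fkWeight_right (κ : ℂ) (p q : ℕ) :
    ((q + 1 : ℕ) : ℂ) * fkWeight κ p q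
      = (2 * κ)⁻¹ * (-1) ^ p * ((p + q + 1).choose (p + 1) : ℕ) := by
  have h := Nat.choose_mul_succ_eq (p + q + 1) (p + 1)
  rw [show p + q + 1 + 1 - (p + 1) = q + 1 by omega] at h
  exact mul_fkWeight_eq κ (by rw [mul_comm]; exact_mod_cast h.symm)

theorem succ_mul_fkWeight_left (κ : ℂ) (p q : ℕ) :
    ((p + 1 : ℕ) : ℂ) * fkWeight κ p q
      = (2 * κ)⁻¹ * (-1) ^ p * ((p + q + 1).choose (q + 1) : ℕ) := by
  have h := Nat.choose_mul_succ_eq (p + q + 1) (q + 1)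
  rw [show p + q + 1 + 1 - (q + 1) = p + 1 by omega,
    Nat.choose_symm_of_eq_add (show p + q + 1 + 1 = (q + 1) + (p + 1) by omega)] at h
  exact mul_fkWeight_eq κ (by rw [mul_comm]; exact_mod_cast h.symm)

theorem shiftSnd_fkCoeff (κ : ℂ) (k : ℕ) (n : ℤ) (p q : ℕ) :
    shiftSnd k (fkCoeff κ n) p q
      = if (p + q + 2 : ℤ) = k - n then
          (2 * κ)⁻¹ * (-1) ^ p * ((p + q + 1 - k).choose (p + 1) : ℕ) else 0 := by
  rw [shiftSnd]
  split_ifs with hk hN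
  · obtain ⟨q, rfl⟩ := Nat.exists_eq_add_of_le' hk
    rw [fkCoeff, if_pos (by push_cast at hN ⊢; omega), Nat.add_sub_cancel,
      succ_mul_fkWeight_right, show p + (q + k) + 1 - k = p + q + 1 by omega]
  · obtain ⟨q, rfl⟩ := Nat.exists_eq_add_of_le' hk
    rw [fkCoeff, if_neg (by push_cast at hN ⊢; omega), mul_zero]
  · rw [Nat.choose_eq_zero_of_lt (by omega), Nat.cast_zero, mul_zero]
  · rfl

theorem shiftFst_fkCoeff (κ : ℂ) (k : ℕ) (n : ℤ) (p q : ℕ) :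
    shiftFst k (fkCoeff κ n) p q
      = if (p + q + 2 : ℤ) = k - n then
          (2 * κ)⁻¹ * (-1) ^ p * ((-1) ^ k * ((p + q + 1 - k).choose (q + 1) : ℕ))
        else 0 := by
  rw [shiftFst]
  split_ifs with hk hN
  · obtain ⟨p, rfl⟩ := Nat.exists_eq_add_of_le' hk
    have hsq : ((-1 : ℂ) ^ k) * (-1) ^ k = 1 := by rw [← pow_add, Even.neg_one_pow ⟨k, rfl⟩]
    rw [fkCoeff, if_pos (by push_cast at hN ⊢; omega), Nat.add_sub_cancel, succ_mul_fkWeight_left,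
      show p + k + q + 1 - k = p + q + 1 by omega, pow_add]
    linear_combination (-(2 * κ)⁻¹ * (-1) ^ p * ((p + q + 1).choose (q + 1) : ℕ)) * hsq
  · obtain ⟨p, rfl⟩ := Nat.exists_eq_add_of_le' hk
    rw [fkCoeff, if_neg (by push_cast at hN ⊢; omega), mul_zero]
  · rw [Nat.choose_eq_zero_of_lt (by omega), Nat.cast_zero, mul_zero, mul_zero]
  · rfl

theorem intCast_mul_fkCoeff (κ : ℂ) (n : ℤ) (p q : ℕ) :
    (n : ℂ) * fkCoeff κ n p q
      = if (p + q + 2 : ℤ) = -n then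
          -((2 * κ)⁻¹ * (-1) ^ p * ((p + q + 2).choose (p + 1) : ℕ)) else 0 := by
  rw [fkCoeff]
  split_ifs with hN
  · rw [← add_two_mul_fkWeight, show n = -((p + q + 2 : ℕ) : ℤ) by omega, Int.cast_neg,
      Int.cast_natCast, neg_mul]
  · rw [mul_zero]

theorem conformal_coeff_eq_zero (κ : ℂ) (j : ℕ) (n : ℤ) (hn : n < 0) (p q : ℕ) :
    shiftSnd j (fkCoeff κ n) p q
      + ∑ m ∈ range (j + 1),
          ((j + 1).choose (m + 1) : ℂ) * shiftFst m (fkCoeff κ (n - (j - m))) p q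
      + ((n - j : ℤ) : ℂ) * fkCoeff κ (n - j) p q = 0 := by
  have hdeg : ∀ m : ℕ, (m : ℤ) - (n - (j - m)) = j - n := fun m ↦ by ring
  simp only [shiftSnd_fkCoeff, shiftFst_fkCoeff, intCast_mul_fkCoeff, hdeg, neg_sub]
  by_cases hN : (p + q + 2 : ℤ) = j - n
  · simp only [hN, if_true]
    have hC : ((p + q + 1 - j).choose (p + 1) : ℂ)
        + ∑ m ∈ range (j + 1),
            (-1) ^ m * ((j + 1).choose (m + 1) : ℂ) * (p + q + 1 - m).choose (q + 1)
        = (p + q + 2).choose (p + 1) := by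
      exact_mod_cast choose_add_sum_alternating_choose_mul_choose p q j (by omega)
    set c : ℂ := (2 * κ)⁻¹ * (-1) ^ p
    rw [show ∑ m ∈ range (j + 1), ((j + 1).choose (m + 1) : ℂ)
          * (c * ((-1) ^ m * ((p + q + 1 - m).choose (q + 1) : ℕ)))
        = c * ∑ m ∈ range (j + 1), (-1) ^ m * ((j + 1).choose (m + 1) : ℂ)
          * (p + q + 1 - m).choose (q + 1) by
      rw [mul_sum]; exact sum_congr rfl fun m _ ↦ by ring]
    linear_combination c * hC
  · simp [hN]

theorem statement4_general (r : ℕ) (κ : ℂ) (j : ℕ) (n : ℤ) (hn : n < 0) :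
    Dmu r j (fk r κ n)
      + ∑ m ∈ Finset.range (j + 1),
          ((Nat.choose (j + 1) (m + 1) : ℕ) : ℂ) • Dlam r m (fk r κ (n - ((j : ℤ) - (m : ℤ))))
      + ((n - (j : ℤ) : ℤ) : ℂ) • fk r κ (n - (j : ℤ)) = 0 := by
  simp only [fk_eq_bilinPoly, Dmu_bilinPoly, Dlam_bilinPoly, ← map_smul, ← map_sum, ← map_add]
  refine (congrArg (bilinPoly r) (funext₂ fun p q ↦ ?_)).trans (map_zero _)
  simp only [Pi.add_apply, Finset.sum_apply, Pi.smul_apply, smul_eq_mul, Pi.zero_apply]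
  exact conformal_coeff_eq_zero κ j n hn p q

theorem statement4 (r : ℕ) (hr : 1 ≤ r) (κ : ℂ) (hκ : κ ≠ 0) (j : ℕ) (n : ℤ) (hn : n < 0) :
    Dmu r j (fk r κ n)
      + ∑ m ∈ Finset.range (j + 1),
          ((Nat.choose (j + 1) (m + 1) : ℕ) : ℂ) • Dlam r m (fk r κ (n - ((j : ℤ) - (m : ℤ))))
      + ((n - (j : ℤ) : ℤ) : ℂ) • fk r κ (n - (j : ℤ)) = 0 :=
  statement4_general r κ j n hn
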